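/- Let n ≥ 1, let y₁,…,yₙ ∈ (0,1), and let λ ∈ (−1,0). Then there exists θ* in the closed interval [n/(−2·Σ_{i=1}^n log yᵢ), n/(−Σ_{i=1}^n log yᵢ)] such that ψ(θ*) = 0; that is, the likelihood equation for the shape parameter θ of the GTLD (with α, β, λ known) has at least one solution in that interval. -/

import Mathlib

/-
Write ψ(θ) = n/θ + S − T(θ) with S = Σ log yᵢ < 0. For λ ∈ (−1, 0] each summand of
T(θ) = 2λ Σ yᵢ^θ log yᵢ / (1 + λ − 2λ yᵢ^θ) lies in [0, −log yᵢ], so 0 ≤ T ≤ −S for every θ.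
Hence ψ(n/(−2S)) = −S − T ≥ 0 and ψ(n/(−S)) = −T ≤ 0, and since ψ is continuous on θ > 0
the intermediate value theorem gives a root in between.
-/

open Real

/-- The profile score function for the shape parameter `θ` of the GTLD:
`ψ(θ) = n/θ + Σᵢ log yᵢ − 2λ Σᵢ yᵢ^θ log yᵢ/(1 + λ − 2λ yᵢ^θ)`. -/
noncomputable def psi (n : ℕ) (y : Fin n → ℝ) (lam : ℝ) (θ : ℝ) : ℝ :=
  (n : ℝ) / θ + ∑ i, Real.log (y i) -
    2 * lam * ∑ i, (y i) ^ θ * Real.log (y i) / (1 + lam - 2 * lam * (y i) ^ θ)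

section ScoreSummand

variable {lam p L : ℝ}

lemma gtld_denom_pos (hp : 0 < p) (hlam₁ : -1 < lam) (hlam₀ : lam ≤ 0) :
    0 < 1 + lam - 2 * lam * p := by
  nlinarith [mul_nonpos_of_nonpos_of_nonneg hlam₀ hp.le]

lemma gtld_summand_nonneg (hp : 0 < p) (hL : L ≤ 0) (hlam₁ : -1 < lam) (hlam₀ : lam ≤ 0) :
    0 ≤ 2 * lam * (p * L / (1 + lam - 2 * lam * p)) := by
  have hden := gtld_denom_pos hp hlam₁ hlam₀
  have hpL : p * L ≤ 0 := mul_nonpos_of_nonneg_of_nonpos hp.le hL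
  exact mul_nonneg_of_nonpos_of_nonpos (by linarith) (div_nonpos_of_nonpos_of_nonneg hpL hden.le)

lemma gtld_summand_le_neg (hp : 0 < p) (hL : L ≤ 0) (hlam₁ : -1 < lam) (hlam₀ : lam ≤ 0) :
    2 * lam * (p * L / (1 + lam - 2 * lam * p)) ≤ -L := by
  have hden := gtld_denom_pos hp hlam₁ hlam₀
  rw [mul_div_assoc', div_le_iff₀ hden]
  -- `-L (1 + λ - 2λp) - 2λpL = -L (1 + λ)`
  nlinarith [mul_nonneg (neg_nonneg.mpr hL) (by linarith : (0 : ℝ) ≤ 1 + lam)]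

end ScoreSummand

section Psi

variable {n : ℕ} {y : Fin n → ℝ} {lam : ℝ}

lemma sum_log_neg (hn : 1 ≤ n) (hy : ∀ i, y i ∈ Set.Ioo (0 : ℝ) 1) :
    ∑ i, Real.log (y i) < 0 := by
  have : (Finset.univ : Finset (Fin n)).Nonempty := Finset.univ_nonempty_iff.mpr ⟨⟨0, hn⟩⟩
  exact Finset.sum_neg (fun i _ => Real.log_neg (hy i).1 (hy i).2) this

variable (hy : ∀ i, y i ∈ Set.Ioo (0 : ℝ) 1) (hlam₁ : -1 < lam) (hlam₀ : lam ≤ 0)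
include hy hlam₁ hlam₀

lemma psi_correction_nonneg (θ : ℝ) :
    0 ≤ 2 * lam * ∑ i, y i ^ θ * Real.log (y i) / (1 + lam - 2 * lam * y i ^ θ) := by
  rw [Finset.mul_sum]
  exact Finset.sum_nonneg fun i _ => gtld_summand_nonneg (rpow_pos_of_pos (hy i).1 θ)
    (Real.log_nonpos (hy i).1.le (hy i).2.le) hlam₁ hlam₀

lemma psi_correction_le (θ : ℝ) :
    2 * lam * ∑ i, y i ^ θ * Real.log (y i) / (1 + lam - 2 * lam * y i ^ θ)
      ≤ -∑ i, Real.log (y i) := by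
  rw [Finset.mul_sum, ← Finset.sum_neg_distrib]
  exact Finset.sum_le_sum fun i _ => gtld_summand_le_neg (rpow_pos_of_pos (hy i).1 θ)
    (Real.log_nonpos (hy i).1.le (hy i).2.le) hlam₁ hlam₀

lemma continuousOn_psi : ContinuousOn (psi n y lam) (Set.Ioi 0) := by
  have hden (i : Fin n) (θ : ℝ) : 1 + lam - 2 * lam * y i ^ θ ≠ 0 :=
    (gtld_denom_pos (rpow_pos_of_pos (hy i).1 θ) hlam₁ hlam₀).ne'
  have hpow (i : Fin n) : Continuous fun θ : ℝ => y i ^ θ :=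
    continuous_const.rpow continuous_id fun _ => Or.inl (hy i).1.ne'
  unfold psi
  refine ((continuousOn_const.div continuousOn_id fun θ hθ => (Set.mem_Ioi.mp hθ).ne').add
    continuousOn_const).sub (continuousOn_const.mul (continuousOn_finsetSum _ fun i _ => ?_))
  exact ((hpow i).mul continuous_const).continuousOn.div
    (continuous_const.sub (continuous_const.mul (hpow i))).continuousOn fun θ _ => hden i θ

end Psi

theorem gtld_mle_exists (n : ℕ) (hn : 1 ≤ n) (y : Fin n → ℝ)
    (hy : ∀ i, y i ∈ Set.Ioo (0 : ℝ) 1) (lam : ℝ)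
    (hlam : lam ∈ Set.Ioo (-1 : ℝ) 0) :
    ∃ θ ∈ Set.Icc ((n : ℝ) / (-2 * ∑ i, Real.log (y i)))
        ((n : ℝ) / (-∑ i, Real.log (y i))),
      psi n y lam θ = 0 := by
  have hlam₁ : -1 < lam := hlam.1
  have hlam₀ : lam ≤ 0 := hlam.2.le
  set S := ∑ i, Real.log (y i)
  have hS : S < 0 := sum_log_neg hn hy
  have hnpos : (0 : ℝ) < n := by exact_mod_cast hn
  have hlo : 0 < (n : ℝ) / (-2 * S) := div_pos hnpos (by linarith)
  have hle : (n : ℝ) / (-2 * S) ≤ n / -S :=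
    div_le_div_of_nonneg_left hnpos.le (by linarith) (by linarith)
  have hψlo : 0 ≤ psi n y lam (n / (-2 * S)) := by
    have := psi_correction_le hy hlam₁ hlam₀ (n / (-2 * S))
    rw [psi, div_div_cancel₀ hnpos.ne']
    linarith
  have hψhi : psi n y lam (n / -S) ≤ 0 := by
    have := psi_correction_nonneg hy hlam₁ hlam₀ (n / -S)
    rw [psi, div_div_cancel₀ hnpos.ne']
    linarith
  have hcont : ContinuousOn (psi n y lam) (Set.Icc (n / (-2 * S)) (n / -S)) :=
    (continuousOn_psi hy hlam₁ hlam₀).mono fun θ hθ => hlo.trans_le hθ.1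
  exact intermediate_value_Icc' hle hcont ⟨hψhi, hψlo⟩
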